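/- arXiv:2604.02659 — 2 statements merged into one kernel-verified Lean document; each statement's English description precedes it below -/
import Mathlib

section
/- For every u ∈ ℝ^C and every index i ∈ {1,…,C}, the absolute row sum of the i-th row of the softmax Jacobian satisfies Σ_{j=1}^C |σ_i(u)·δ_{ij} − σ_i(u)·σ_j(u)| ≤ 1/2. -/
/-- The softmax function on `ℝ^C`: `σ_i(u) = exp(u_i) / ∑_ℓ exp(u_ℓ)`. -/
noncomputable def softmax {C : ℕ} (u : Fin C → ℝ) : Fin C → ℝ :=
  fun i => Real.exp (u i) / ∑ ℓ, Real.exp (u ℓ)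

/-! Each row of the softmax Jacobian is `σ_i(u)` times the difference between the point mass
at `i` and the probability vector `σ(u)`. The `ℓ¹`-distance from a probability vector `p` to
the point mass at `i` is `2 (1 - p_i)`, so the absolute row sum is `2 σ_i (1 - σ_i) ≤ 1/2`. -/

open Finset

theorem sum_abs_ite_sub_eq {ι : Type*} [Fintype ι] [DecidableEq ι] {p : ι → ℝ}
    (hp : ∀ j, 0 ≤ p j) (hp_sum : ∑ j, p j = 1) (i : ι) :
    ∑ j, |(if i = j then (1 : ℝ) else 0) - p j| = 2 * (1 - p i) := by
  have hrest : ∑ j ∈ univ.erase i, p j = 1 - p i := by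
    rw [← hp_sum, ← add_sum_erase univ p (mem_univ i), add_sub_cancel_left]
  have hpi_le : p i ≤ 1 := by linarith [sum_nonneg fun j (_ : j ∈ univ.erase i) => hp j]
  rw [← add_sum_erase _ _ (mem_univ i), if_pos rfl, abs_of_nonneg (sub_nonneg.2 hpi_le)]
  have hoff : ∀ j ∈ univ.erase i, |(if i = j then (1 : ℝ) else 0) - p j| = p j := fun j hj => by
    rw [if_neg (ne_of_mem_erase hj).symm, zero_sub, abs_neg, abs_of_nonneg (hp j)]
  rw [sum_congr rfl hoff, hrest]
  ring

theorem softmax_pos {C : ℕ} (u : Fin C → ℝ) (i : Fin C) : 0 < softmax u i :=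
  have : Nonempty (Fin C) := ⟨i⟩
  div_pos (Real.exp_pos _) (sum_pos (fun _ _ => Real.exp_pos _) univ_nonempty)

theorem sum_softmax {C : ℕ} [NeZero C] (u : Fin C → ℝ) : ∑ j, softmax u j = 1 := by
  unfold softmax
  rw [← sum_div, div_self (sum_pos (fun _ _ => Real.exp_pos _) univ_nonempty).ne']

theorem softmax_jacobian_row_sum_le_half_general {C : ℕ} (u : Fin C → ℝ) (i : Fin C) :
    ∑ j : Fin C,
        |softmax u i * (if i = j then (1 : ℝ) else 0) - softmax u i * softmax u j| ≤
      1 / 2 := by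
  have : NeZero C := ⟨i.pos.ne'⟩
  have hrow : ∑ j : Fin C,
      |softmax u i * (if i = j then (1 : ℝ) else 0) - softmax u i * softmax u j|
        = softmax u i * (2 * (1 - softmax u i)) := by
    simp_rw [← mul_sub, abs_mul, abs_of_pos (softmax_pos u i), ← mul_sum]
    rw [sum_abs_ite_sub_eq (fun j => (softmax_pos u j).le) (sum_softmax u)]
  rw [hrow]
  nlinarith [sq_nonneg (2 * softmax u i - 1)]

/-- The absolute row sum of each row of the softmax Jacobian is at most `1/2`. -/
theorem softmax_jacobian_row_sum_le_half {C : ℕ} (hC : 0 < C) (u : Fin C → ℝ) (i : Fin C) :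
    ∑ j : Fin C,
        |softmax u i * (if i = j then (1 : ℝ) else 0) - softmax u i * softmax u j| ≤
      1 / 2 :=
  softmax_jacobian_row_sum_le_half_general u i
end

section
/- (Softmax perturbation under low-rank approximation.) Let W and W̃ be real C×D matrices, b ∈ ℝ^C, and h ∈ ℝ^D with Euclidean norm ‖h‖₂ ≤ R. Define the logits z = W·h + b and z̃ = W̃·h + b, and the probability vectors p = σ(z) and p̃ = σ(z̃), where σ is the softmax function. Then ‖p̃ − p‖_∞ ≤ (1/2)·R·‖W − W̃‖₂, where ‖·‖₂ on matrices denotes the spectral norm and ‖w‖_∞ = max_i |w_i|. -/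
/-- The spectral norm of a real `C × D` matrix: the operator norm of the induced
linear map from `ℝ^D` with the Euclidean norm to `ℝ^C` with the Euclidean norm. -/
noncomputable def matrixSpectralNorm {C D : ℕ} (A : Matrix (Fin C) (Fin D) ℝ) : ℝ :=
  ‖LinearMap.toContinuousLinearMap (Matrix.toEuclideanLin A)‖

open Finset

/-! Along the segment from `v` to `u`, with `d = u - v` and `p = σ` at the current point, the
derivative of `σ_i` is `p_i (d_i - ∑ p_j d_j) = p_i ∑_{j ≠ i} p_j (d_i - d_j)`, of absolute
value at most `p_i (1 - p_i) · 2‖d‖_∞ ≤ ‖d‖_∞ / 2`. Hence softmax is `1/2`-Lipschitz for the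
sup norm, and the logit gap `(W - W̃) h` has sup norm at most its Euclidean norm, i.e. at most
`‖W - W̃‖₂ R`. -/

theorem abs_mul_sub_weighted_sum_le {ι : Type*} [Fintype ι] {p d : ι → ℝ} {M : ℝ}
    (hp : ∀ j, 0 ≤ p j) (hp1 : ∑ j, p j = 1) (hd : ∀ j, |d j| ≤ M) (i : ι) :
    |p i * (d i - ∑ j, p j * d j)| ≤ M / 2 := by
  classical
  have hM : 0 ≤ M := (abs_nonneg _).trans (hd i)
  have hcentred : d i - ∑ j, p j * d j = ∑ j ∈ univ.erase i, p j * (d i - d j) := by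
    rw [sum_erase _ (by simp)]
    simp only [mul_sub, sum_sub_distrib, ← sum_mul, hp1, one_mul]
  have hdev : |d i - ∑ j, p j * d j| ≤ (1 - p i) * (2 * M) :=
    calc |d i - ∑ j, p j * d j| ≤ ∑ j ∈ univ.erase i, |p j * (d i - d j)| := by
          rw [hcentred]; exact abs_sum_le_sum_abs _ _
      _ ≤ ∑ j ∈ univ.erase i, p j * (2 * M) := by
          refine sum_le_sum fun j _ => ?_
          rw [abs_mul, abs_of_nonneg (hp j)]
          exact mul_le_mul_of_nonneg_left
            ((abs_sub (d i) (d j)).trans (by linarith [hd i, hd j])) (hp j)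
      _ = (1 - p i) * (2 * M) := by rw [← sum_mul, sum_erase_eq_sub (mem_univ i), hp1]
  rw [abs_mul, abs_of_nonneg (hp i)]
  calc p i * |d i - ∑ j, p j * d j| ≤ p i * ((1 - p i) * (2 * M)) := by gcongr; exact hp i
    _ ≤ M / 2 := by nlinarith [sq_nonneg (p i - 1 / 2)]

theorem sum_exp_pos {ι : Type*} [Fintype ι] [Nonempty ι] (u : ι → ℝ) :
    0 < ∑ j, Real.exp (u j) :=
  sum_pos (fun _ _ => Real.exp_pos _) univ_nonempty

theorem softmax_nonneg {C : ℕ} (u : Fin C → ℝ) (i : Fin C) : 0 ≤ softmax u i := by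
  unfold softmax; positivity

theorem hasDerivAt_softmax_comp {C : ℕ} [NeZero C] {w : ℝ → Fin C → ℝ} {w' : Fin C → ℝ} {t : ℝ}
    (hw : HasDerivAt w w' t) (i : Fin C) :
    HasDerivAt (fun s => softmax (w s) i)
      (softmax (w t) i * (w' i - ∑ j, softmax (w t) j * w' j)) t := by
  have hexp (j : Fin C) : HasDerivAt (fun s => Real.exp (w s j)) (Real.exp (w t j) * w' j) t :=
    (hasDerivAt_pi.1 hw j).exp
  have hS := (sum_exp_pos (w t)).ne'
  refine ((hexp i).fun_div (HasDerivAt.fun_sum fun j _ => hexp j) hS).congr_deriv ?_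
  simp only [softmax, div_mul_eq_mul_div, ← sum_div]
  field_simp

theorem abs_softmax_sub_le {C : ℕ} [NeZero C] (u v : Fin C → ℝ) (i : Fin C) :
    |softmax u i - softmax v i| ≤ 1 / 2 * ‖u - v‖ := by
  set d := u - v
  have hpath (t : ℝ) : HasDerivAt (fun s : ℝ => v + s • d) d t := by
    simpa using ((hasDerivAt_id t).smul_const d).const_add v
  have hslope (t : ℝ) :
      |softmax (v + t • d) i * (d i - ∑ j, softmax (v + t • d) j * d j)| ≤ ‖d‖ / 2 :=
    abs_mul_sub_weighted_sum_le (softmax_nonneg _) (sum_softmax _)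
      (fun j => norm_le_pi_norm d j) i
  have := norm_image_sub_le_of_norm_deriv_le_segment_01'
    (fun t _ => (hasDerivAt_softmax_comp (hpath t) i).hasDerivWithinAt) (fun t _ => hslope t)
  simpa [d, div_eq_inv_mul] using this

theorem norm_softmax_sub_le {C : ℕ} (u v : Fin C → ℝ) :
    ‖softmax u - softmax v‖ ≤ 1 / 2 * ‖u - v‖ := by
  refine (pi_norm_le_iff_of_nonneg (by positivity)).2 fun i => ?_
  have : NeZero C := ⟨i.pos.ne'⟩
  exact abs_softmax_sub_le u v i

theorem matrixSpectralNorm_nonneg {C D : ℕ} (A : Matrix (Fin C) (Fin D) ℝ) :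
    0 ≤ matrixSpectralNorm A :=
  norm_nonneg _

theorem norm_mulVec_le_matrixSpectralNorm_mul {C D : ℕ} (A : Matrix (Fin C) (Fin D) ℝ)
    (x : EuclideanSpace ℝ (Fin D)) :
    ‖A.mulVec (WithLp.equiv 2 (Fin D → ℝ) x)‖ ≤ matrixSpectralNorm A * ‖x‖ := by
  refine (pi_norm_le_iff_of_nonneg (by positivity [matrixSpectralNorm_nonneg A])).2 fun i => ?_
  calc ‖(A.mulVec (WithLp.equiv 2 (Fin D → ℝ) x)) i‖ = ‖Matrix.toEuclideanLin A x i‖ := rfl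
    _ ≤ ‖Matrix.toEuclideanLin A x‖ := PiLp.norm_apply_le _ i
    _ ≤ matrixSpectralNorm A * ‖x‖ :=
      (LinearMap.toContinuousLinearMap (Matrix.toEuclideanLin A)).le_opNorm x

theorem softmax_perturbation_general {C D : ℕ}
    (W Wt : Matrix (Fin C) (Fin D) ℝ) (b : Fin C → ℝ) (R : ℝ)
    (h : EuclideanSpace ℝ (Fin D)) (hh : ‖h‖ ≤ R) :
    ‖softmax (Wt.mulVec (WithLp.equiv 2 (Fin D → ℝ) h) + b) -
        softmax (W.mulVec (WithLp.equiv 2 (Fin D → ℝ) h) + b)‖ ≤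
      (1 / 2) * R * matrixSpectralNorm (W - Wt) := by
  set x := WithLp.equiv 2 (Fin D → ℝ) h
  have hlogits : (W.mulVec x + b) - (Wt.mulVec x + b) = (W - Wt).mulVec x := by
    rw [Matrix.sub_mulVec]; abel
  calc _ ≤ 1 / 2 * ‖(W.mulVec x + b) - (Wt.mulVec x + b)‖ := by
        rw [norm_sub_rev]; exact norm_softmax_sub_le _ _
    _ ≤ 1 / 2 * (matrixSpectralNorm (W - Wt) * R) := by
        rw [hlogits]
        gcongr
        exact (norm_mulVec_le_matrixSpectralNorm_mul _ h).trans
          (mul_le_mul_of_nonneg_left hh (matrixSpectralNorm_nonneg _))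
    _ = 1 / 2 * R * matrixSpectralNorm (W - Wt) := by ring

/-- Softmax perturbation under low-rank approximation: for logits `z = W·h + b` and
`z̃ = W̃·h + b` with `‖h‖₂ ≤ R`, the softmax outputs satisfy
`‖σ(z̃) - σ(z)‖_∞ ≤ (1/2)·R·‖W - W̃‖₂` (the norm on `Fin C → ℝ` is the sup norm). -/
theorem softmax_perturbation {C D : ℕ} (hC : 0 < C) (hD : 0 < D)
    (W Wt : Matrix (Fin C) (Fin D) ℝ) (b : Fin C → ℝ) (R : ℝ)
    (h : EuclideanSpace ℝ (Fin D)) (hh : ‖h‖ ≤ R) :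
    ‖softmax (Wt.mulVec (WithLp.equiv 2 (Fin D → ℝ) h) + b) -
        softmax (W.mulVec (WithLp.equiv 2 (Fin D → ℝ) h) + b)‖ ≤
      (1 / 2) * R * matrixSpectralNorm (W - Wt) :=
  softmax_perturbation_general W Wt b R h hh
end
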